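/- arXiv:1807.04576 — 2 statements merged into one kernel-verified Lean document; each statement's English description precedes it below -/
import Mathlib

section
/- Fix integers a ≥ 1, c ≥ 1 and m ≥ 0. Then there exists a polynomial P ∈ ℚ[X] of degree at most ⌊m/(ac)⌋ such that A_{a,b,c}(m) = P(b) for every integer b. That is, for fixed a, c and m, the coefficient A_{a,b,c}(m) is a polynomial function of b of degree at most ⌊m/(ac)⌋. -/
open scoped Classical

/-- The unit of `ℤ⟦X⟧` given by `1 - X^k` (for `k ≥ 1`; junk value `1` otherwise). -/
noncomputable def etaUnit (k : ℕ) : (PowerSeries ℤ)ˣ :=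
  if h : IsUnit ((1 : PowerSeries ℤ) - PowerSeries.X ^ k) then h.unit else 1

/-- `A a b c m` is the coefficient of `q^m` in
`F_{a,b,c} = ∏_{n=1}^∞ (1-q^{an})^a (1-q^{acn})^{b-a} (1-q^n)⁻¹`.
Since every factor with `n > m` is `1 + O(q^{m+1})` (as `a, c ≥ 1`), the coefficient of `q^m`
in the infinite product equals the corresponding coefficient of the finite product over
`1 ≤ n ≤ m`. -/
noncomputable def A (a : ℕ) (b : ℤ) (c : ℕ) (m : ℕ) : ℤ :=
  PowerSeries.coeff (R := ℤ) m
    ((∏ n ∈ Finset.Icc 1 m,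
      (etaUnit (a * n)) ^ a * (etaUnit (a * c * n)) ^ (b - a) * (etaUnit n)⁻¹ :
        (PowerSeries ℤ)ˣ) : PowerSeries ℤ)

/-- A power series with coefficient sequence `α` is lacunary if almost all of its
coefficients vanish. -/
def IsLacunary (α : ℕ → ℤ) : Prop :=
  Filter.Tendsto
    (fun x : ℕ => (((Finset.range x).filter fun m => α m = 0).card : ℝ) / x)
    Filter.atTop (nhds 1)

/-! Split the product as `G · V^(b-a)` with `V = ∏ (1 - q^{acn}) = 1 + W`, where `q^{ac} ∣ W`.
For `n ≥ 0` the binomial theorem gives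
`[q^m] G' (1 + W)^n = ∑_{j ≤ m/(ac)} (n choose j) [q^m] G' W^j`, because `q^{acj} ∣ W^j`;
this is a polynomial of degree `≤ m/(ac)` in `n`. Taking `G' = G V^N` covers all exponents
`≥ N`, and since polynomials agreeing at infinitely many integers coincide, a single polynomial
serves every exponent in `ℤ`. -/

open Finset
open scoped Nat Polynomial

namespace Polynomial

variable {K : Type*}

theorem natDegree_comp_X_sub_C_le [CommRing K] (P : K[X]) (r : K) :
    (P.comp (X - C r)).natDegree ≤ P.natDegree :=
  natDegree_comp_le.trans ((Nat.mul_le_mul_left _ (natDegree_X_sub_C_le r)).trans_eq (mul_one _))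

theorem exists_natDegree_le_eval_natCast_eq_sum_choose [Field K] [CharZero K] (d : ℕ)
    (c : ℕ → K) :
    ∃ P : K[X], P.natDegree ≤ d ∧
      ∀ n : ℕ, ∑ j ∈ range (d + 1), (n.choose j : K) * c j = P.eval (n : K) := by
  refine ⟨∑ j ∈ range (d + 1), C (c j / j !) * descPochhammer K j,
    natDegree_sum_le_of_forall_le _ _ fun j hj => ?_, fun n => ?_⟩
  · exact (natDegree_C_mul_le _ _).trans (by simpa [Nat.lt_succ_iff] using hj)
  · simp only [eval_finsetSum, eval_mul, eval_C, Nat.cast_choose_eq_descPochhammer_div]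
    exact sum_congr rfl fun j _ => by ring

theorem exists_eval_intCast_eq_of_forall_le [CommRing K] [IsDomain K] [CharZero K] {f : ℤ → K}
    {d : ℕ} (h : ∀ N : ℤ, ∃ P : K[X], P.natDegree ≤ d ∧ ∀ k, N ≤ k → f k = P.eval (k : K)) :
    ∃ P : K[X], P.natDegree ≤ d ∧ ∀ k, f k = P.eval (k : K) := by
  choose P hPd hP using h
  refine ⟨P 0, hPd 0, fun k => ?_⟩
  have hP_eq : P (min k 0) = P 0 := by
    refine eq_of_infinite_eval_eq _ _ (Set.infinite_of_injective_forall_mem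
      (f := fun n : ℕ => (n : K)) Nat.cast_injective fun n => ?_)
    have h₁ := hP (min k 0) n ((min_le_right k 0).trans (Int.natCast_nonneg n))
    have h₂ := hP 0 n (Int.natCast_nonneg n)
    simp only [Int.cast_natCast] at h₁ h₂
    exact h₁.symm.trans h₂
  rw [hP (min k 0) k (min_le_left k 0), hP_eq]

end Polynomial

theorem dvd_prod_sub_one {ι R : Type*} [CommRing R] {r : R} {s : Finset ι} {g : ι → R}
    (h : ∀ i ∈ s, r ∣ g i - 1) : r ∣ ∏ i ∈ s, g i - 1 := by
  refine prod_induction g (fun x => r ∣ x - 1) (fun x y hx hy => ?_) (by simp) h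
  rw [show x * y - 1 = x * (y - 1) + (x - 1) by ring]
  exact (hy.mul_left x).add hx

namespace PowerSeries

variable {R : Type*} [CommRing R]

theorem coeff_mul_pow_eq_zero_of_X_pow_dvd {s m j : ℕ} {W : R⟦X⟧} (hW : X ^ s ∣ W)
    (hm : m < s * j) (G : R⟦X⟧) : coeff m (G * W ^ j) = 0 :=
  X_pow_dvd_iff.mp ((pow_mul (X : R⟦X⟧) s j ▸ pow_dvd_pow_of_dvd hW j).mul_left G) m hm

theorem coeff_mul_one_add_pow {s : ℕ} (hs : 0 < s) {W : R⟦X⟧} (hW : X ^ s ∣ W) (G : R⟦X⟧)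
    (m n : ℕ) :
    coeff m (G * (1 + W) ^ n) =
      ∑ j ∈ range (m / s + 1), (n.choose j : R) * coeff m (G * W ^ j) := by
  set f : ℕ → R := fun j => (n.choose j : R) * coeff m (G * W ^ j)
  have hf : ∀ j, n < j ∨ m / s < j → f j = 0 := by
    rintro j (hj | hj)
    · simp only [f, Nat.choose_eq_zero_of_lt hj, Nat.cast_zero, zero_mul]
    · have hm : m < s * j := (Nat.lt_mul_div_succ m hs).trans_le (Nat.mul_le_mul_left s hj)
      simp only [f, coeff_mul_pow_eq_zero_of_X_pow_dvd hW hm G, mul_zero]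
  calc coeff m (G * (1 + W) ^ n) = ∑ j ∈ range (n + 1), f j := by
        rw [add_comm, add_pow, mul_sum, map_sum]
        refine sum_congr rfl fun j _ => ?_
        rw [one_pow, mul_one, ← mul_assoc, mul_comm, ← map_natCast (C (R := R)), coeff_C_mul]
    _ = ∑ j ∈ range (n + m / s + 1), f j :=
        sum_subset (range_subset_range.2 (Nat.add_le_add_right (Nat.le_add_right n _) 1))
          fun j _ hj => hf j (Or.inl (by simpa using hj))
    _ = ∑ j ∈ range (m / s + 1), f j :=
        (sum_subset (range_subset_range.2 (Nat.add_le_add_right (Nat.le_add_left _ n) 1))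
          fun j _ hj => hf j (Or.inr (by simpa using hj))).symm

theorem exists_natDegree_le_coeff_mul_zpow {K : Type*} [Field K] [CharZero K] [Algebra R K]
    {s : ℕ} (hs : 0 < s) (G : R⟦X⟧) {V : R⟦X⟧ˣ} (hV : X ^ s ∣ (V : R⟦X⟧) - 1) (m : ℕ) :
    ∃ P : K[X], P.natDegree ≤ m / s ∧
      ∀ k : ℤ, algebraMap R K (coeff m (G * ↑(V ^ k))) = P.eval (k : K) := by
  refine Polynomial.exists_eval_intCast_eq_of_forall_le fun N => ?_
  obtain ⟨P, hPd, hP⟩ := Polynomial.exists_natDegree_le_eval_natCast_eq_sum_choose (m / s)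
    fun j => algebraMap R K (coeff m (G * ↑(V ^ N) * ((V : R⟦X⟧) - 1) ^ j))
  refine ⟨P.comp (Polynomial.X - Polynomial.C (N : K)),
    (Polynomial.natDegree_comp_X_sub_C_le P _).trans hPd, fun k hk => ?_⟩
  obtain ⟨n, rfl⟩ : ∃ n : ℕ, k = N + n := ⟨(k - N).toNat, by omega⟩
  have hVn : ((V ^ (N + n) : R⟦X⟧ˣ) : R⟦X⟧) = ↑(V ^ N) * (1 + ((V : R⟦X⟧) - 1)) ^ n := by
    rw [zpow_add, zpow_natCast, Units.val_mul, Units.val_pow_eq_pow_val, add_sub_cancel]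
  rw [hVn, ← mul_assoc, coeff_mul_one_add_pow hs hV, Polynomial.eval_comp]
  simp only [map_sum, map_mul, map_natCast, hP, Polynomial.eval_sub, Polynomial.eval_X,
    Polynomial.eval_C, Int.cast_add, Int.cast_natCast, add_sub_cancel_left]

end PowerSeries

theorem coe_etaUnit {k : ℕ} (hk : 0 < k) :
    (etaUnit k : PowerSeries ℤ) = 1 - PowerSeries.X ^ k := by
  have h : IsUnit ((1 : PowerSeries ℤ) - PowerSeries.X ^ k) := by
    rw [PowerSeries.isUnit_iff_constantCoeff]
    simp [zero_pow hk.ne']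
  rw [etaUnit, dif_pos h, IsUnit.unit_spec]

theorem X_pow_dvd_prod_etaUnit_sub_one {s : ℕ} (hs : 0 < s) {t : Finset ℕ}
    (ht : ∀ n ∈ t, 0 < n) :
    PowerSeries.X ^ s ∣ ((∏ n ∈ t, etaUnit (s * n) : (PowerSeries ℤ)ˣ) : PowerSeries ℤ) - 1 := by
  rw [Units.coe_prod]
  refine dvd_prod_sub_one fun n hn => ?_
  rw [coe_etaUnit (Nat.mul_pos hs (ht n hn)), sub_sub_cancel_left]
  exact (pow_dvd_pow _ (Nat.le_mul_of_pos_right s (ht n hn))).neg_right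

theorem A_eq_coeff_mul_zpow (a : ℕ) (b : ℤ) (c m : ℕ) :
    A a b c m = PowerSeries.coeff m
      (((∏ n ∈ Icc 1 m, etaUnit (a * n) ^ a * (etaUnit n)⁻¹ : (PowerSeries ℤ)ˣ) : PowerSeries ℤ) *
        (((∏ n ∈ Icc 1 m, etaUnit (a * c * n)) ^ (b - a) : (PowerSeries ℤ)ˣ) : PowerSeries ℤ)) := by
  rw [A, ← Units.val_mul, ← prod_zpow, ← prod_mul_distrib]
  exact congrArg _ (congrArg _ (prod_congr rfl fun n _ => mul_right_comm _ _ _))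

/-- For fixed `a ≥ 1`, `c ≥ 1` and `m ≥ 0`, the coefficient `A_{a,b,c}(m)` is a polynomial
function of `b` of degree at most `⌊m / (ac)⌋`. -/
theorem coeff_polynomial_in_b (a c m : ℕ) (ha : 1 ≤ a) (hc : 1 ≤ c) :
    ∃ P : Polynomial ℚ, P.degree ≤ (m / (a * c) : ℕ) ∧
      ∀ b : ℤ, (A a b c m : ℚ) = P.eval (b : ℚ) := by
  have hac : 0 < a * c := Nat.mul_pos ha hc
  obtain ⟨P, hPd, hP⟩ := PowerSeries.exists_natDegree_le_coeff_mul_zpow (K := ℚ) hac _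
    (X_pow_dvd_prod_etaUnit_sub_one hac fun n hn => (mem_Icc.1 hn).1) m
  refine ⟨P.comp (Polynomial.X - Polynomial.C (a : ℚ)), Polynomial.natDegree_le_iff_degree_le.1
    ((Polynomial.natDegree_comp_X_sub_C_le P _).trans hPd), fun b => ?_⟩
  rw [A_eq_coeff_mul_zpow, ← eq_intCast (algebraMap ℤ ℚ), hP, Polynomial.eval_comp]
  simp
end

section
/- Let t be a squarefree positive integer coprime to 6 having at least 12 distinct prime factors. Then there exists a positive integer s < t with s ≡ 23 (mod 24) such that the Jacobi symbol (−p | s) equals −1 for every prime p dividing t. -/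
open Finset ArithmeticFunction
open scoped ArithmeticFunction.Moebius Nat

/-!
Take `s = 24 t - u ^ 2` for some `u` coprime to `6 t` with `23 t < u ^ 2 < 24 t`. Then
`u ^ 2 ≡ 1 (mod 24)` gives `s ≡ 23 (mod 24)`, and for `p ∣ t` we have `s ≡ -u ^ 2 (mod p)`, so
`(s | p) = (-1 | p)` and quadratic reciprocity yields `(-p | s) = -1` whatever `p` is mod `4`.

Such a `u` exists by Legendre's sieve: the interval `(√(23 t), √(24 t))` has length more than
`√t / 10`, and the number of its elements coprime to `6 t` differs from
`length · φ(6 t) / (6 t)` by at most `#divisors (6 t) = 4 · 2 ^ ω(t)`. This error is beaten because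
`φ(t) ^ 2 / (4 ^ ω(t) t) = ∏_{p ∣ t} (p - 1) ^ 2 / (4 p)` exceeds `150 ^ 2` as soon as `t` has
`12` prime factors, all at least `5`.
-/

theorem Nat.card_filter_dvd_Ioc {a b : ℕ} (hab : a ≤ b) (d : ℕ) :
    #{u ∈ Ioc a b | d ∣ u} = b / d - a / d := by
  have hsplit : Ioc 0 b = Ioc 0 a ∪ Ioc a b := (Ioc_union_Ioc_eq_Ioc a.zero_le hab).symm
  have hdisj : Disjoint (Ioc 0 a) (Ioc a b) :=
    disjoint_left.mpr fun u hu hu' => by simp only [mem_Ioc] at hu hu'; omega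
  have := Nat.Ioc_filter_dvd_card_eq_div b d
  rw [hsplit, filter_union, card_union_of_disjoint (disjoint_filter_filter hdisj),
    Nat.Ioc_filter_dvd_card_eq_div] at this
  omega

theorem Nat.sum_divisors_filter_dvd_moebius {m : ℕ} (hm : m ≠ 0) (u : ℕ) :
    ∑ d ∈ m.divisors with d ∣ u, (μ d : ℤ) = if u.Coprime m then 1 else 0 := by
  have hdiv : {d ∈ m.divisors | d ∣ u} = (u.gcd m).divisors := by
    ext d
    simp only [mem_filter, Nat.mem_divisors, Nat.dvd_gcd_iff, ne_eq,
      Nat.gcd_eq_zero_iff, hm, and_false, not_false_eq_true]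
    tauto
  rw [hdiv, ← coe_mul_zeta_apply, moebius_mul_coe_zeta, one_apply]

theorem Nat.card_filter_coprime_Ioc_eq_sum_moebius {m a b : ℕ} (hm : m ≠ 0) (hab : a ≤ b) :
    (#{u ∈ Ioc a b | u.Coprime m} : ℤ) = ∑ d ∈ m.divisors, μ d * ((b / d : ℕ) - (a / d : ℕ)) := by
  calc (#{u ∈ Ioc a b | u.Coprime m} : ℤ)
      = ∑ u ∈ Ioc a b, ∑ d ∈ m.divisors with d ∣ u, (μ d : ℤ) := by
        simp only [Nat.sum_divisors_filter_dvd_moebius hm, sum_boole]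
    _ = ∑ d ∈ m.divisors, ∑ u ∈ Ioc a b with d ∣ u, (μ d : ℤ) :=
        sum_comm' fun u d => by simp only [mem_filter]; tauto
    _ = ∑ d ∈ m.divisors, μ d * ((b / d : ℕ) - (a / d : ℕ)) := by
        refine sum_congr rfl fun d _ => ?_
        rw [sum_const, Nat.card_filter_dvd_Ioc hab, nsmul_eq_mul, mul_comm,
          Nat.cast_sub (Nat.div_le_div_right hab)]

theorem Nat.sum_divisors_moebius_div (m : ℕ) :
    ∑ d ∈ m.divisors, (μ d : ℝ) / d = φ m / m := by
  rcases eq_or_ne m 0 with rfl | hm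
  · simp
  have hinv := (sum_eq_iff_sum_mul_moebius_eq (R := ℝ) (f := fun n => (φ n : ℝ))
    (g := fun n => (n : ℝ))).mp (fun n _ => by exact_mod_cast Nat.sum_totient n) m (by omega)
  rw [Nat.sum_divisorsAntidiagonal (fun d e => (μ d : ℝ) * e)] at hinv
  rw [← hinv, eq_div_iff (by exact_mod_cast hm), sum_mul]
  refine sum_congr rfl fun d hd => ?_
  have hd0 : (d : ℝ) ≠ 0 := by exact_mod_cast (Nat.pos_of_mem_divisors hd).ne'
  rw [Nat.cast_div (Nat.dvd_of_mem_divisors hd) hd0]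
  field_simp

theorem Nat.card_filter_coprime_Ioc_ge {m a b : ℕ} (hm : m ≠ 0) (hab : a ≤ b) :
    ((b : ℝ) - a) * φ m / m - #m.divisors ≤ #{u ∈ Ioc a b | u.Coprime m} := by
  have hcount : (#{u ∈ Ioc a b | u.Coprime m} : ℝ)
      = ∑ d ∈ m.divisors, (μ d : ℝ) * ((b / d : ℕ) - (a / d : ℕ)) := by
    exact_mod_cast Nat.card_filter_coprime_Ioc_eq_sum_moebius hm hab
  rw [hcount, mul_div_assoc, ← Nat.sum_divisors_moebius_div, mul_sum, card_eq_sum_ones,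
    Nat.cast_sum, ← sum_sub_distrib]
  refine sum_le_sum fun d hd => ?_
  have hd : (0 : ℝ) < d := by exact_mod_cast Nat.pos_of_mem_divisors hd
  have hfloor (n : ℕ) : (n : ℝ) / d - 1 < (n / d : ℕ) ∧ ((n / d : ℕ) : ℝ) ≤ n / d := by
    rw [← Nat.floor_div_eq_div (K := ℝ)]
    exact ⟨sub_lt_iff_lt_add.mpr (Nat.lt_floor_add_one _), Nat.floor_le (by positivity)⟩
  have hμ : |(μ d : ℝ)| ≤ 1 := by exact_mod_cast abs_moebius_le_one
  have herr : |(μ d : ℝ) * ((b / d : ℕ) - (a / d : ℕ)) - ((b : ℝ) - a) * (μ d / d)| ≤ 1 := by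
    rw [show (μ d : ℝ) * ((b / d : ℕ) - (a / d : ℕ)) - ((b : ℝ) - a) * (μ d / d)
        = μ d * (((b / d : ℕ) - (a / d : ℕ)) - ((b : ℝ) / d - a / d)) by field_simp, abs_mul]
    obtain ⟨hb1, hb2⟩ := hfloor b
    obtain ⟨ha1, ha2⟩ := hfloor a
    exact mul_le_one₀ hμ (abs_nonneg _) (abs_sub_le_iff.mpr ⟨by linarith, by linarith⟩)
  linarith [neg_abs_le ((μ d : ℝ) * ((b / d : ℕ) - (a / d : ℕ)) - ((b : ℝ) - a) * (μ d / d))]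

theorem Finset.prod_le_prod_of_le_one_of_one_le {ι R : Type*} [CommSemiring R] [PartialOrder R]
    [IsOrderedRing R] [DecidableEq ι] {s t : Finset ι} {g : ι → R}
    (hs : ∀ i ∈ s, 0 ≤ g i ∧ g i ≤ 1) (ht : ∀ i ∈ t, i ∉ s → 1 ≤ g i) :
    ∏ i ∈ s, g i ≤ ∏ i ∈ t, g i := by
  have hnonneg : 0 ≤ ∏ i ∈ s ∩ t, g i := prod_nonneg fun i hi => (hs i (mem_inter.mp hi).1).1
  calc ∏ i ∈ s, g i = (∏ i ∈ s ∩ t, g i) * ∏ i ∈ s \ t, g i :=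
        (prod_inter_mul_prod_sdiff s t g).symm
    _ ≤ (∏ i ∈ s ∩ t, g i) * 1 := by
      refine mul_le_mul_of_nonneg_left (prod_le_one (fun i hi => ?_) fun i hi => ?_) hnonneg
      exacts [(hs i (mem_sdiff.mp hi).1).1, (hs i (mem_sdiff.mp hi).1).2]
    _ ≤ (∏ i ∈ t ∩ s, g i) * ∏ i ∈ t \ s, g i := by
      rw [inter_comm]
      exact mul_le_mul_of_nonneg_left
        (one_le_prod fun i hi => ht i (mem_sdiff.mp hi).1 (mem_sdiff.mp hi).2) (by rwa [inter_comm])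
    _ = ∏ i ∈ t, g i := prod_inter_mul_prod_sdiff t s g

theorem le_prod_sq_sub_one_div_four_mul {s : Finset ℕ} (hs : ∀ p ∈ s, p.Prime ∧ 5 ≤ p)
    (hcard : 12 ≤ #s) : 22500 ≤ ∏ p ∈ s, ((p : ℝ) - 1) ^ 2 / (4 * p) := by
  set f : ℕ → ℝ := fun p => ((p : ℝ) - 1) ^ 2 / (4 * p)
  -- `c = f 17`, so among primes `p ≥ 5` only `5, 7, 11, 13` have `f p < c`.
  set c : ℝ := 64 / 17
  have hsmall : ∀ p ∈ ({5, 7, 11, 13} : Finset ℕ), 0 ≤ f p / c ∧ f p / c ≤ 1 := by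
    simp only [mem_insert, mem_singleton]
    rintro p (rfl | rfl | rfl | rfl) <;> norm_num [f, c]
  have hlarge : ∀ p ∈ s, p ∉ ({5, 7, 11, 13} : Finset ℕ) → 1 ≤ f p / c := by
    intro p hp hp'
    obtain ⟨hprime, hp5⟩ := hs p hp
    have h17 : 17 ≤ p := by
      by_contra!
      simp only [mem_insert, mem_singleton] at hp'
      interval_cases p <;> simp_all +decide
    have h17' : (17 : ℝ) ≤ p := by exact_mod_cast h17
    simp only [f, c]
    rw [one_le_div (by norm_num), le_div_iff₀ (by positivity)]
    nlinarith [mul_nonneg (sub_nonneg.mpr h17') (by linarith : (0 : ℝ) ≤ 17 * p - 1)]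
  calc (22500 : ℝ) ≤ c ^ 12 * ∏ p ∈ {5, 7, 11, 13}, f p / c := by norm_num [f, c]
    _ ≤ c ^ #s * ∏ p ∈ s, f p / c := by
      refine mul_le_mul (pow_le_pow_right₀ (by norm_num [c]) hcard)
        (prod_le_prod_of_le_one_of_one_le hsmall hlarge)
        (prod_nonneg fun p hp => (hsmall p hp).1) (by positivity)
    _ = ∏ p ∈ s, f p := by
      rw [← prod_const, ← prod_mul_distrib]
      exact prod_congr rfl fun p _ => mul_div_cancel₀ _ (by norm_num [c])

theorem Nat.card_divisors_of_squarefree {n : ℕ} (hn : Squarefree n) :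
    #n.divisors = 2 ^ #n.primeFactors := by
  rw [Nat.card_divisors hn.ne_zero, ← prod_const]
  exact prod_congr rfl fun p hp => by
    rw [Nat.factorization_eq_one_of_squarefree hn (Nat.prime_of_mem_primeFactors hp)
      (Nat.dvd_of_mem_primeFactors hp)]

theorem Nat.totient_sq_div_eq_prod {t : ℕ} (ht : Squarefree t) :
    (φ t : ℝ) ^ 2 / (4 ^ #t.primeFactors * t) =
      ∏ p ∈ t.primeFactors, ((p : ℝ) - 1) ^ 2 / (4 * p) := by
  have htot : φ t = ∏ p ∈ t.primeFactors, (p - 1) := by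
    rw [Nat.totient_eq_div_primeFactors_mul, Nat.prod_primeFactors_of_squarefree ht,
      Nat.div_self (Nat.pos_of_ne_zero ht.ne_zero), one_mul]
  have ht' : (t : ℝ) = ∏ p ∈ t.primeFactors, (p : ℝ) := by
    rw [← Nat.cast_prod, Nat.prod_primeFactors_of_squarefree ht]
  rw [prod_div_distrib, prod_mul_distrib, prod_const, prod_pow, ← ht', htot, Nat.cast_prod,
    prod_congr rfl fun p hp => Nat.cast_pred (R := ℝ) (Nat.pos_of_mem_primeFactors hp)]

theorem Nat.five_le_of_mem_primeFactors {t p : ℕ} (h6 : t.Coprime 6) (hp : p ∈ t.primeFactors) :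
    5 ≤ p := by
  have hp6 : p.Coprime 6 := h6.coprime_dvd_left (Nat.dvd_of_mem_primeFactors hp)
  refine (Nat.prime_of_mem_primeFactors hp).five_le_of_ne_two_of_ne_three ?_ ?_ <;>
    rintro rfl <;> norm_num at hp6

theorem Nat.le_totient_sq_of_coprime_six {t : ℕ} (ht : Squarefree t) (h6 : t.Coprime 6)
    (hm : 12 ≤ #t.primeFactors) : 22500 * 4 ^ #t.primeFactors * (t : ℝ) ≤ φ t ^ 2 := by
  have hbound := le_prod_sq_sub_one_div_four_mul
    (fun p hp => ⟨Nat.prime_of_mem_primeFactors hp, Nat.five_le_of_mem_primeFactors h6 hp⟩) hm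
  rw [← Nat.totient_sq_div_eq_prod ht, le_div_iff₀ (by have := ht.ne_zero; positivity)] at hbound
  linarith

-- In other words, `b - a ≥ (√24 - √23) √x > √x / 10`.
theorem Real.le_hundred_mul_sq_sub {a b x : ℝ} (ha2 : a ^ 2 ≤ 23 * x)
    (hb2 : 24 * x ≤ b ^ 2) : x ≤ 100 * (b - a) ^ 2 := by
  by_contra! h
  have hab : a ≤ b := by nlinarith
  have h1 : (2 * a * (b - a)) ^ 2 ≤ 92 / 100 * x ^ 2 := by
    nlinarith [mul_le_mul ha2 h.le (by positivity) (by nlinarith)]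
  have h2 : 2 * a * (b - a) ≤ 96 / 100 * x := by nlinarith
  nlinarith

theorem card_filter_coprime_six_mul_Ioc_pos {t a b : ℕ} (ht : Squarefree t) (h6 : t.Coprime 6)
    (hm : 12 ≤ #t.primeFactors) (hab : a ≤ b) (hgap : (t : ℝ) ≤ 100 * ((b : ℝ) + 1 - a) ^ 2) :
    0 < #{u ∈ Ioc a b | u.Coprime (6 * t)} := by
  set n := #t.primeFactors
  have ht0 : (0 : ℝ) < t := by exact_mod_cast Nat.pos_of_ne_zero ht.ne_zero
  have hsieve := Nat.card_filter_coprime_Ioc_ge (m := 6 * t) (by have := ht.ne_zero; positivity) hab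
  rw [Nat.totient_mul h6.symm, Nat.Coprime.card_divisors_mul h6.symm,
    Nat.card_divisors_of_squarefree ht] at hsieve
  have hlen : 15 * 2 ^ n * (t : ℝ) ≤ ((b : ℝ) + 1 - a) * φ t := by
    have hL : (a : ℝ) ≤ b := by exact_mod_cast hab
    have h4 : (4 : ℝ) ^ n = (2 ^ n) ^ 2 := by rw [← pow_mul, mul_comm, pow_mul]; norm_num
    refine (pow_le_pow_iff_left₀ (by positivity) (by nlinarith [Nat.cast_nonneg (α := ℝ) (φ t)])
      two_ne_zero).mp ?_
    calc (15 * 2 ^ n * (t : ℝ)) ^ 2 = t / 100 * (22500 * 4 ^ n * t) := by rw [h4]; ring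
      _ ≤ ((b : ℝ) + 1 - a) ^ 2 * φ t ^ 2 :=
        mul_le_mul (by linarith) (Nat.le_totient_sq_of_coprime_six ht h6 hm) (by positivity)
          (by positivity)
      _ = (((b : ℝ) + 1 - a) * φ t) ^ 2 := by ring
  have hφ : (φ t : ℝ) ≤ t := by exact_mod_cast Nat.totient_le t
  have hsix : φ 6 = 2 ∧ #(Nat.divisors 6) = 4 := by decide
  rw [hsix.1, hsix.2] at hsieve
  push_cast at hsieve
  have hmain : (2 : ℝ) ^ n - 1 / 3 ≤ ((b : ℝ) - a) * (2 * φ t) / (6 * t) - 4 * 2 ^ n := by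
    rw [show ((b : ℝ) - a) * (2 * φ t) / (6 * t) = ((b : ℝ) - a) * φ t / (3 * t) by
      field_simp; ring, le_sub_iff_add_le, le_div_iff₀ (by positivity)]
    nlinarith
  have h2n : (1 : ℝ) ≤ 2 ^ n := one_le_pow₀ (by norm_num)
  exact_mod_cast (by linarith : (0 : ℝ) < #{u ∈ Ioc a b | u.Coprime (6 * t)})

theorem exists_coprime_six_mul_sq_mem_Ioo {t : ℕ} (ht : Squarefree t) (h6 : t.Coprime 6)
    (hm : 12 ≤ #t.primeFactors) : ∃ u, u.Coprime (6 * t) ∧ 23 * t < u ^ 2 ∧ u ^ 2 < 24 * t := by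
  have ht0 := ht.ne_zero
  set a := Nat.sqrt (23 * t)
  set b := Nat.sqrt (24 * t - 1)
  have ha : a ^ 2 ≤ 23 * t := Nat.sqrt_le' _
  have ha' : 23 * t < (a + 1) ^ 2 := Nat.lt_succ_sqrt' _
  have hb : b ^ 2 ≤ 24 * t - 1 := Nat.sqrt_le' _
  have hb' : 24 * t ≤ (b + 1) ^ 2 := by
    have : 24 * t - 1 < (b + 1) ^ 2 := Nat.lt_succ_sqrt' _
    omega
  have hgap : (t : ℝ) ≤ 100 * ((b : ℝ) + 1 - a) ^ 2 :=
    Real.le_hundred_mul_sq_sub (by exact_mod_cast ha) (by exact_mod_cast hb')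
  obtain ⟨u, hu⟩ := card_pos.mp
    (card_filter_coprime_six_mul_Ioc_pos ht h6 hm (Nat.sqrt_le_sqrt (by omega)) hgap)
  simp only [mem_filter, mem_Ioc] at hu
  obtain ⟨⟨hau, hub⟩, hcop⟩ := hu
  refine ⟨u, hcop, ha'.trans_le (Nat.pow_le_pow_left hau 2), ?_⟩
  have : u ^ 2 ≤ b ^ 2 := Nat.pow_le_pow_left hub 2
  omega

theorem Nat.sq_mod_twentyFour_of_coprime_six {u : ℕ} (hu : u.Coprime 6) : u ^ 2 % 24 = 1 := by
  have h2 : ¬ 2 ∣ u := fun h => by simpa using Nat.eq_one_of_dvd_coprimes hu h (by norm_num)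
  have h3 : ¬ 3 ∣ u := fun h => by simpa using Nat.eq_one_of_dvd_coprimes hu h (by norm_num)
  rw [Nat.pow_mod]
  have := Nat.mod_lt u (show 0 < 24 by norm_num)
  interval_cases h : u % 24 <;> omega

theorem jacobiSym_neg_eq_neg_one_of_dvd_add_sq {p s : ℕ} {u : ℤ} (hp : Odd p) (hs : s % 4 = 3)
    (hu : u.gcd p = 1) (hdvd : (p : ℤ) ∣ s + u ^ 2) : jacobiSym (-p) s = -1 := by
  have hs_odd : Odd s := Nat.odd_iff.mpr (by omega)
  have hsp : jacobiSym s p = ZMod.χ₄ p := by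
    have hcong : (s : ℤ) ≡ -u ^ 2 [ZMOD p] := by
      rw [Int.modEq_iff_dvd, show -u ^ 2 - (s : ℤ) = -(s + u ^ 2) by ring]
      exact hdvd.neg_right
    rw [jacobiSym.mod_left' hcong, jacobiSym.neg _ hp, jacobiSym.sq_one' hu, mul_one]
  rw [jacobiSym.neg _ hs_odd, ZMod.χ₄_nat_three_mod_four hs]
  rcases Nat.odd_mod_four_iff.mp (Nat.odd_iff.mp hp) with hp1 | hp3
  · rw [jacobiSym.quadratic_reciprocity_one_mod_four hp1 hs_odd, hsp, ZMod.χ₄_nat_one_mod_four hp1]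
    norm_num
  · rw [jacobiSym.quadratic_reciprocity_three_mod_four hp3 hs, hsp,
      ZMod.χ₄_nat_three_mod_four hp3]
    norm_num

/-- If `t` is squarefree, coprime to `6`, and has at least `12` distinct prime factors, then
there is a positive `s < t` with `s ≡ 23 (mod 24)` such that the Jacobi symbol `(-p | s)`
equals `-1` for every prime `p` dividing `t`. -/
theorem exists_inert_s (t : ℕ) (ht : Squarefree t) (h6 : Nat.Coprime t 6)
    (hm : 12 ≤ t.primeFactors.card) :
    ∃ s : ℕ, 0 < s ∧ s < t ∧ s % 24 = 23 ∧
      ∀ p : ℕ, p.Prime → p ∣ t → jacobiSym (-(p : ℤ)) s = -1 := by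
  obtain ⟨u, hu, h23, h24⟩ := exists_coprime_six_mul_sq_mem_Ioo ht h6 hm
  have hu24 := Nat.sq_mod_twentyFour_of_coprime_six (Nat.Coprime.coprime_mul_right_right hu)
  refine ⟨24 * t - u ^ 2, by omega, by omega, by omega, fun p hp hpt => ?_⟩
  have hp5 := Nat.five_le_of_mem_primeFactors h6 (Nat.mem_primeFactors.mpr ⟨hp, hpt, ht.ne_zero⟩)
  refine jacobiSym_neg_eq_neg_one_of_dvd_add_sq (u := u) (hp.odd_of_ne_two (by omega)) (by omega)
    ?_ ?_
  · rw [Int.gcd_natCast_natCast]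
    exact Nat.Coprime.coprime_dvd_right (dvd_mul_of_dvd_right hpt 6) hu
  · rw [Nat.cast_sub h24.le, Nat.cast_mul, Nat.cast_pow, sub_add_cancel]
    exact (Int.natCast_dvd_natCast.mpr hpt).mul_left _
end
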